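/- Let Γ be a group generated by a finite symmetric subset S with 1 ∈ S, and let ρ : Γ ↷ (X,ν) be a measure-class-preserving measurable action on a probability space. Then ρ is asymptotically expanding in measure if and only if there exist an increasing sequence (Y_n)_{n∈ℕ} of measurable subsets of X with ν(X ∖ ⋃_n Y_n) = 0 and constants c_n > 0 such that each Y_n is a domain of (c_n, S)-expansion. -/

import Mathlib

open MeasureTheory Set Filter Pointwise

/-- The union `S · A = ⋃ s ∈ S, s • A` of the translates of `A` by elements of the
finite set `S ⊆ Γ`. -/
def finSMul {Γ X : Type*} [Group Γ] [MulAction Γ X] (S : Finset Γ) (A : Set X) : Set X :=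
  ⋃ s ∈ S, s • A

/-- `S` is a finite symmetric subset of `Γ` containing the identity. -/
def SymmFin {Γ : Type*} [Group Γ] (S : Finset Γ) : Prop :=
  (1 : Γ) ∈ S ∧ ∀ s ∈ S, s⁻¹ ∈ S

/-- The `S`-boundary `∂_S A = (S·A) \ A`. -/
def finBdry {Γ X : Type*} [Group Γ] [MulAction Γ X] (S : Finset Γ) (A : Set X) : Set X :=
  finSMul S A \ A

/-- `Y` is a domain of `(c,S)`-expansion: `ν((S·A) ∩ Y) > (1+c)·ν(A)` for every
measurable `A ⊆ Y` with `0 < ν(A) ≤ ν(Y)/2`. -/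
def ExpandsOn {Γ X : Type*} [Group Γ] [MulAction Γ X] [MeasurableSpace X]
    (ν : MeasureTheory.Measure X) (Y : Set X) (c : ℝ) (S : Finset Γ) : Prop :=
  ∀ A : Set X, MeasurableSet A → A ⊆ Y → 0 < ν A → ν A ≤ ν Y / 2 →
    (1 + ENNReal.ofReal c) * ν A < ν (finSMul S A ∩ Y)

/-- `Y` is a domain of expansion: `(c,S)`-expansion for some `c > 0` and some finite
symmetric `S ∋ 1`. -/
def ExpDomain (Γ : Type*) {X : Type*} [Group Γ] [MulAction Γ X] [MeasurableSpace X]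
    (ν : MeasureTheory.Measure X) (Y : Set X) : Prop :=
  ∃ c : ℝ, 0 < c ∧ ∃ S : Finset Γ, SymmFin S ∧ ExpandsOn ν Y c S

/-- The `(α,c,S)` asymptotic-expansion estimate on `Y`: `ν((S·A) ∩ Y) > (1+c)·ν(A)` for
every measurable `A ⊆ Y` with `α·ν(Y) ≤ ν(A) ≤ ν(Y)/2`. -/
def AsymExpandsOn {Γ X : Type*} [Group Γ] [MulAction Γ X] [MeasurableSpace X]
    (ν : MeasureTheory.Measure X) (Y : Set X) (α c : ℝ) (S : Finset Γ) : Prop :=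
  ∀ A : Set X, MeasurableSet A → A ⊆ Y → ENNReal.ofReal α * ν Y ≤ ν A → ν A ≤ ν Y / 2 →
    (1 + ENNReal.ofReal c) * ν A < ν (finSMul S A ∩ Y)

/-- `Y` is a domain of asymptotic expansion. -/
def AsymExpDomain (Γ : Type*) {X : Type*} [Group Γ] [MulAction Γ X] [MeasurableSpace X]
    (ν : MeasureTheory.Measure X) (Y : Set X) : Prop :=
  ∀ α : ℝ, 0 < α → α ≤ 1 / 2 →
    ∃ c : ℝ, 0 < c ∧ ∃ S : Finset Γ, SymmFin S ∧ AsymExpandsOn ν Y α c S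

/-- The action of `Γ` on the probability space `(X,ν)` is strongly ergodic: every almost
invariant sequence of measurable sets is asymptotically trivial. -/
def StronglyErgodic (Γ : Type*) {X : Type*} [Group Γ] [MulAction Γ X] [MeasurableSpace X]
    (ν : MeasureTheory.Measure X) : Prop :=
  ∀ C : ℕ → Set X, (∀ n, MeasurableSet (C n)) →
    (∀ γ : Γ, Filter.Tendsto (fun n => ν (symmDiff (C n) (γ • C n))) Filter.atTop (nhds 0)) →
    Filter.Tendsto (fun n => ν (C n) * (1 - ν (C n))) Filter.atTop (nhds 0)

/-- The action of `Γ` on `(X,ν)` is measure-class-preserving. -/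
def MeasClassPres (Γ : Type*) {X : Type*} [Group Γ] [MulAction Γ X] [MeasurableSpace X]
    (ν : MeasureTheory.Measure X) : Prop :=
  ∀ (γ : Γ) (A : Set X), MeasurableSet A → (ν (γ • A) = 0 ↔ ν A = 0)

/-- The action of `Γ` on `(X,ν)` is ergodic: every invariant measurable set is null or
conull. -/
def ErgodicAct (Γ : Type*) {X : Type*} [Group Γ] [MulAction Γ X] [MeasurableSpace X]
    (ν : MeasureTheory.Measure X) : Prop :=
  ∀ A : Set X, MeasurableSet A → (∀ γ : Γ, γ • A = A) → ν A = 0 ∨ ν Aᶜ = 0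

/-- `W` admits an exhaustion by measurable subsets satisfying `P`. -/
def ExhaustionBy {X : Type*} [MeasurableSpace X] (ν : MeasureTheory.Measure X)
    (W : Set X) (P : Set X → Prop) : Prop :=
  ∃ Y : ℕ → Set X, Monotone Y ∧ (∀ n, MeasurableSet (Y n)) ∧ (∀ n, Y n ⊆ W) ∧
    (∀ n, P (Y n)) ∧ ν (W \ ⋃ n, Y n) = 0


/-!
Asymptotic expansion in measure together with generation by `S` gives an isoperimetric
inequality: a set whose `S`-boundary is small is small or co-small, because `T`-boundaries for
finite `T` are covered by boundedly many translates of the `S`-boundary, and translates of small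
sets are small by absolute continuity of the translated measures. Greedily removing near-maximal
non-expanding sets therefore removes little (the union removed has small boundary), and what
remains is a domain of expansion; two domains of measure at least `7/8` have an expanding union,
which yields the increasing exhaustion.

Conversely, let `D` be a domain of `(c, S)`-expansion of almost full measure and `α ≤ ν A ≤ 1/2`.
If `A ∩ D` is at most half of `D` it expands inside `D`. Otherwise `D \ A` does, its boundary
in `D` lies in `A`, and by symmetry of `S` the points of `D \ A` that see this boundary form a
set of definite measure in the boundary of `A`.
-/

open scoped ENNReal Topology

lemma ENNReal.ofReal_one_half : ENNReal.ofReal (1 / 2) = 1 / 2 := by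
  norm_num [ENNReal.ofReal_div_of_pos]

lemma MeasureTheory.Measure.AbsolutelyContinuous.exists_pos_forall_measure_lt {α : Type*}
    [MeasurableSpace α] {μ ν : Measure α} [IsFiniteMeasure μ] [SigmaFinite ν] (h : μ ≪ ν)
    {ε : ℝ≥0∞} (hε : ε ≠ 0) : ∃ δ > 0, ∀ s, ν s < δ → μ s < ε := by
  obtain ⟨δ, hδ, hs⟩ :=
    exists_pos_setLIntegral_lt_of_measure_lt (μ.lintegral_rnDeriv_lt_top ν).ne hε
  exact ⟨δ, hδ, fun s hνs => Measure.setLIntegral_rnDeriv h s ▸ hs s hνs⟩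

section MeasureLemmas

variable {X : Type*} [MeasurableSpace X] {ν : Measure X} {A U : Set X}

lemma MeasureTheory.tendsto_measure_iUnion_sdiff_atTop [IsFiniteMeasure ν] {s : ℕ → Set X}
    (hs : Monotone s) (hm : ∀ n, MeasurableSet (s n)) :
    Tendsto (fun n => ν ((⋃ i, s i) \ s n)) atTop (𝓝 0) := by
  have h := ENNReal.Tendsto.sub tendsto_const_nhds (tendsto_measure_iUnion_atTop (μ := ν) hs)
    (Or.inl (measure_ne_top ν (⋃ i, s i)))
  rw [tsub_self] at h
  refine h.congr fun n => ?_
  rw [Function.comp_apply,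
    measure_sdiff (subset_iUnion s n) (hm n).nullMeasurableSet (measure_ne_top ν _)]

lemma ofReal_sub_le_measure_sdiff {a b : ℝ} (hU : ENNReal.ofReal a ≤ ν U)
    (hA : ν A ≤ ENNReal.ofReal b) (hb : 0 ≤ b) : ENNReal.ofReal (a - b) ≤ ν (U \ A) :=
  calc ENNReal.ofReal (a - b) = ENNReal.ofReal a - ENNReal.ofReal b := ENNReal.ofReal_sub a hb
    _ ≤ ν U - ν A := tsub_le_tsub hU hA
    _ ≤ ν (U \ A) := le_measure_sdiff

lemma ofReal_one_sub_le_measure [IsProbabilityMeasure ν] {D : Set X}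
    {α : ℝ} (hα : 0 ≤ α) (hD : ν Dᶜ ≤ ENNReal.ofReal α) :
    ENNReal.ofReal (1 - α) ≤ ν D := by
  simpa [sdiff_compl] using ofReal_sub_le_measure_sdiff (U := univ) (by simp) hD hα

end MeasureLemmas

section Pointwise

variable {Γ X : Type*} [Group Γ] [MulAction Γ X] {S T : Finset Γ} {A B C I : Set X}

lemma mem_finSMul {x : X} : x ∈ finSMul S A ↔ ∃ s ∈ S, ∃ a ∈ A, s • a = x := by
  simp [finSMul, Set.mem_smul_set]

lemma finSMul_mono (h : A ⊆ B) : finSMul S A ⊆ finSMul S B :=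
  biUnion_mono subset_rfl fun _ _ => smul_set_mono h

lemma finSMul_mono_left (h : S ⊆ T) : finSMul S A ⊆ finSMul T A :=
  biUnion_subset_biUnion_left (Finset.coe_subset.2 h)

lemma subset_finSMul (h1 : (1 : Γ) ∈ S) : A ⊆ finSMul S A :=
  fun x hx => mem_finSMul.2 ⟨1, h1, x, hx, one_smul _ _⟩

lemma finSMul_union : finSMul S (A ∪ B) = finSMul S A ∪ finSMul S B := by
  simp only [finSMul, smul_set_union, iUnion_union_distrib]

lemma finSMul_one [DecidableEq Γ] : finSMul (1 : Finset Γ) A = A := by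
  simp [finSMul]

lemma finSMul_mul [DecidableEq Γ] : finSMul (S * T) A = finSMul S (finSMul T A) := by
  ext x
  simp only [mem_finSMul, Finset.mem_mul]
  constructor
  · rintro ⟨_, ⟨s, hs, t, ht, rfl⟩, a, ha, rfl⟩
    exact ⟨s, hs, t • a, ⟨t, ht, a, ha, rfl⟩, (mul_smul s t a).symm⟩
  · rintro ⟨s, hs, _, ⟨t, ht, a, ha, rfl⟩, rfl⟩
    exact ⟨s * t, ⟨s, hs, t, ht, rfl⟩, a, ha, mul_smul s t a⟩

lemma finBdry_mono_left (h : S ⊆ T) : finBdry S A ⊆ finBdry T A :=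
  sdiff_subset_sdiff_left (finSMul_mono_left h)

lemma finBdry_union_subset : finBdry S (A ∪ B) ⊆ finBdry S A ∪ (finBdry S B ∩ Aᶜ) := by
  intro x
  simp only [finBdry, finSMul_union, mem_union, Set.mem_sdiff, mem_inter_iff, mem_compl_iff]
  tauto

lemma finBdry_compl_subset (hS : ∀ s ∈ S, s⁻¹ ∈ S) : finBdry S Aᶜ ⊆ finSMul S (finBdry S A) := by
  rintro x ⟨hx, hxA⟩
  obtain ⟨s, hs, y, hy, rfl⟩ := mem_finSMul.1 hx
  refine mem_finSMul.2 ⟨s, hs, y, ⟨mem_finSMul.2 ⟨s⁻¹, hS s hs, s • y, not_not.1 hxA, ?_⟩, hy⟩, rfl⟩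
  exact inv_smul_smul s y

lemma finBdry_pow_subset [DecidableEq Γ] (h1 : (1 : Γ) ∈ S) (k : ℕ) :
    finBdry (S ^ k) A ⊆ finSMul (S ^ k) (finBdry S A) := by
  induction k with
  | zero => simp [finBdry, finSMul_one]
  | succ k ih =>
    rintro x ⟨hx, hxA⟩
    rw [pow_succ, finSMul_mul] at hx
    obtain ⟨g, hg, y, hy, rfl⟩ := mem_finSMul.1 hx
    have hmono := finSMul_mono_left (A := finBdry S A) (Finset.pow_subset_pow_right h1 k.le_succ)
    by_cases hyA : y ∈ A
    · exact hmono (ih ⟨mem_finSMul.2 ⟨g, hg, y, hyA, rfl⟩, hxA⟩)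
    · exact hmono (mem_finSMul.2 ⟨g, hg, y, ⟨hy, hyA⟩, rfl⟩)

lemma subset_finSMul_inter_finSMul (hS : ∀ s ∈ S, s⁻¹ ∈ S) (h : I ⊆ finSMul S C) :
    I ⊆ finSMul S (C ∩ finSMul S I) := by
  intro y hy
  obtain ⟨s, hs, z, hz, rfl⟩ := mem_finSMul.1 (h hy)
  exact mem_finSMul.2 ⟨s, hs, z, ⟨hz, mem_finSMul.2 ⟨s⁻¹, hS s hs, s • z, hy, by simp⟩⟩, rfl⟩

lemma measurableSet_finSMul [MeasurableSpace X] (hmeas : ∀ γ : Γ, Measurable fun x : X => γ • x)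
    (S : Finset Γ) (hA : MeasurableSet A) : MeasurableSet (finSMul S A) :=
  S.measurableSet_biUnion fun s _ => preimage_smul_inv s A ▸ hA.preimage (hmeas s⁻¹)

lemma measurableSet_finBdry [MeasurableSpace X] (hmeas : ∀ γ : Γ, Measurable fun x : X => γ • x)
    (S : Finset Γ) (hA : MeasurableSet A) : MeasurableSet (finBdry S A) :=
  (measurableSet_finSMul hmeas S hA).diff hA

end Pointwise

section Generation

variable {Γ : Type*} [Group Γ] [DecidableEq Γ] {S : Finset Γ}

lemma Finset.inv_mem_pow_of_symm (hS : ∀ s ∈ S, s⁻¹ ∈ S) {k : ℕ} {γ : Γ} (h : γ ∈ S ^ k) :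
    γ⁻¹ ∈ S ^ k := by
  induction k generalizing γ with
  | zero => simp_all
  | succ k ih =>
    rw [pow_succ] at h
    obtain ⟨a, ha, b, hb, rfl⟩ := Finset.mem_mul.1 h
    rw [pow_succ', mul_inv_rev]
    exact Finset.mul_mem_mul (hS b hb) (ih ha)

lemma exists_mem_pow_of_closure_eq_top (hS : SymmFin S) (hgen : Subgroup.closure (S : Set Γ) = ⊤)
    (γ : Γ) : ∃ k, γ ∈ S ^ k := by
  induction (hgen ▸ Subgroup.mem_top γ : γ ∈ Subgroup.closure (S : Set Γ))
    using Subgroup.closure_induction with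
  | mem s hs => exact ⟨1, by simpa using hs⟩
  | one => exact ⟨0, by simp⟩
  | mul a b _ _ ha hb =>
    obtain ⟨k, hk⟩ := ha
    obtain ⟨l, hl⟩ := hb
    exact ⟨k + l, pow_add S k l ▸ Finset.mul_mem_mul hk hl⟩
  | inv a _ ha =>
    obtain ⟨k, hk⟩ := ha
    exact ⟨k, Finset.inv_mem_pow_of_symm hS.2 hk⟩

lemma exists_subset_pow_of_closure_eq_top (hS : SymmFin S)
    (hgen : Subgroup.closure (S : Set Γ) = ⊤) (T : Finset Γ) : ∃ k, T ⊆ S ^ k := by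
  choose k hk using exists_mem_pow_of_closure_eq_top hS hgen
  exact ⟨T.sup k, fun t ht => Finset.pow_subset_pow_right hS.1 (Finset.le_sup ht) (hk t)⟩

end Generation

section Expansion

variable {Γ X : Type*} [Group Γ] [MulAction Γ X] [MeasurableSpace X] {ν : Measure X}
  {S : Finset Γ} {A U W : Set X} {c : ℝ}

lemma MeasClassPres.exists_pos_measure_finSMul_lt [IsFiniteMeasure ν]
    (hmcp : MeasClassPres Γ ν) (hmeas : ∀ γ : Γ, Measurable fun x : X => γ • x)
    (F : Finset Γ) {ε : ℝ} (hε : 0 < ε) :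
    ∃ δ : ℝ, 0 < δ ∧ ∀ Z, MeasurableSet Z → ν Z ≤ ENNReal.ofReal δ →
      ν (finSMul F Z) < ENNReal.ofReal ε := by
  set μ : Measure X := ∑ s ∈ F, ν.map (fun x => s⁻¹ • x)
  have hμ : ∀ Z, MeasurableSet Z → μ Z = ∑ s ∈ F, ν (s • Z) := fun Z hZ => by
    simp only [μ, Measure.finsetSum_apply, Measure.map_apply (hmeas _) hZ, preimage_smul_inv]
  have hac : μ ≪ ν := Measure.AbsolutelyContinuous.mk fun Z hZ hZ0 => by
    rw [hμ Z hZ]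
    exact Finset.sum_eq_zero fun s _ => (hmcp s Z hZ).2 hZ0
  obtain ⟨δ, hδ, hsmall⟩ := hac.exists_pos_forall_measure_lt (ENNReal.ofReal_pos.2 hε).ne'
  obtain ⟨r, -, hr0, hrδ⟩ := ENNReal.lt_iff_exists_real_btwn.1 hδ
  refine ⟨r, ENNReal.ofReal_pos.1 hr0, fun Z hZ hZr => ?_⟩
  calc ν (finSMul F Z) ≤ ∑ s ∈ F, ν (s • Z) := measure_biUnion_finset_le _ _
    _ = μ Z := (hμ Z hZ).symm
    _ < ENNReal.ofReal ε := hsmall Z (hZr.trans_lt hrδ)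

lemma measure_finSMul_inter_eq_add (h1 : (1 : Γ) ∈ S) (hA : MeasurableSet A) (hAW : A ⊆ W) :
    ν (finSMul S A ∩ W) = ν A + ν (finBdry S A ∩ W) := by
  have hsplit : finSMul S A ∩ W = A ∪ (finBdry S A ∩ W) := by
    ext x
    have hxS : x ∈ A → x ∈ finSMul S A := fun hx => subset_finSMul h1 hx
    have hxW : x ∈ A → x ∈ W := fun hx => hAW hx
    simp only [finBdry, mem_inter_iff, mem_union, Set.mem_sdiff]
    tauto
  rw [hsplit, measure_union' (disjoint_left.2 fun x hxA hx => hx.1.2 hxA) hA]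

lemma lt_measure_finSMul_inter_iff [IsFiniteMeasure ν] (h1 : (1 : Γ) ∈ S)
    (hA : MeasurableSet A) (hAW : A ⊆ W) :
    (1 + ENNReal.ofReal c) * ν A < ν (finSMul S A ∩ W) ↔
      ENNReal.ofReal c * ν A < ν (finBdry S A ∩ W) := by
  rw [measure_finSMul_inter_eq_add h1 hA hAW, add_mul, one_mul,
    ENNReal.add_lt_add_iff_left (measure_ne_top ν A)]

lemma ExpandsOn.mono {c' : ℝ} (h : ExpandsOn ν W c S) (hc : c' ≤ c) : ExpandsOn ν W c' S :=
  fun A hA hAW h0 hhalf => lt_of_le_of_lt (by gcongr) (h A hA hAW h0 hhalf)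

lemma ExpandsOn.lt_measure_finBdry_inter [IsFiniteMeasure ν] (h : ExpandsOn ν U c S)
    (h1 : (1 : Γ) ∈ S) (hU : MeasurableSet U) (hA : MeasurableSet A) (h0 : 0 < ν (A ∩ U))
    (hhalf : ν (A ∩ U) ≤ ν U / 2) :
    ENNReal.ofReal c * ν (A ∩ U) < ν (finBdry S A ∩ U) := by
  have hP := hA.inter hU
  refine ((lt_measure_finSMul_inter_iff h1 hP inter_subset_right).1
    (h _ hP inter_subset_right h0 hhalf)).trans_le (measure_mono ?_)
  rintro x ⟨⟨hxS, hxP⟩, hxU⟩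
  exact ⟨⟨finSMul_mono inter_subset_left hxS, fun hxA => hxP ⟨hxA, hxU⟩⟩, hxU⟩

/-- The boundary `I` of `U \ A` in `U` lies in `A`. By symmetry of `S`, `I` is covered by the
`S`-translates of `Z = (U \ A) ∩ S·I`, so `Z` cannot be small; and `Z` lies in the boundary
of `A`. -/
lemma ExpandsOn.lt_measure_finBdry_inter_of_sdiff [IsFiniteMeasure ν] (h : ExpandsOn ν U c S)
    (hmeas : ∀ γ : Γ, Measurable fun x : X => γ • x) (hS : SymmFin S) (hU : MeasurableSet U)
    (hA : MeasurableSet A) {β κ : ℝ} (hβ : 0 < β)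
    (hκ : ∀ Z, MeasurableSet Z → ν Z ≤ ENNReal.ofReal κ → ν (finSMul S Z) < ENNReal.ofReal (c * β))
    (hβU : ENNReal.ofReal β ≤ ν (U \ A)) (hhalf : ν (U \ A) ≤ ν U / 2) :
    ENNReal.ofReal κ < ν (finBdry S A ∩ U) := by
  have hC : MeasurableSet (U \ A) := hU.diff hA
  set I := finBdry S (U \ A) ∩ U
  have hI : ENNReal.ofReal c * ν (U \ A) < ν I :=
    (lt_measure_finSMul_inter_iff hS.1 hC sdiff_subset).1
      (h _ hC sdiff_subset ((ENNReal.ofReal_pos.2 hβ).trans_le hβU) hhalf)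
  have hIA : I ⊆ A := fun x hx => by_contra fun hxA => hx.1.2 ⟨hx.2, hxA⟩
  set Z := (U \ A) ∩ finSMul S I
  have hZ : ENNReal.ofReal κ < ν Z := by
    by_contra! hZ
    have hZm : MeasurableSet Z :=
      hC.inter (measurableSet_finSMul hmeas S ((measurableSet_finBdry hmeas S hC).inter hU))
    have hIZ : I ⊆ finSMul S Z := subset_finSMul_inter_finSMul hS.2 fun x hx => hx.1.1
    refine (hκ Z hZm hZ).not_ge ?_
    calc ENNReal.ofReal (c * β) = ENNReal.ofReal c * ENNReal.ofReal β :=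
          ENNReal.ofReal_mul' hβ.le
      _ ≤ ENNReal.ofReal c * ν (U \ A) := by gcongr
      _ ≤ ν I := hI.le
      _ ≤ ν (finSMul S Z) := measure_mono hIZ
  refine hZ.trans_le (measure_mono ?_)
  rintro x ⟨⟨hxU, hxA⟩, hxI⟩
  exact ⟨⟨finSMul_mono hIA hxI, hxA⟩, hxU⟩

lemma exists_pos_min_lt_measure_finBdry_inter [IsFiniteMeasure ν]
    (hmeas : ∀ γ : Γ, Measurable fun x : X => γ • x) (hmcp : MeasClassPres Γ ν) (hS : SymmFin S)
    (hc : 0 < c) {β : ℝ} (hβ : 0 < β) :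
    ∃ κ : ℝ, 0 < κ ∧ ∀ U A, MeasurableSet U → MeasurableSet A → ExpandsOn ν U c S →
      0 < ν (A ∩ U) → ENNReal.ofReal β ≤ ν (U \ A) →
      min (ENNReal.ofReal c * ν (A ∩ U)) (ENNReal.ofReal κ) < ν (finBdry S A ∩ U) := by
  obtain ⟨κ, hκ0, hκ⟩ := hmcp.exists_pos_measure_finSMul_lt hmeas S (mul_pos hc hβ)
  refine ⟨κ, hκ0, fun U A hU hA h h0 hβU => ?_⟩
  by_cases hhalf : ν (A ∩ U) ≤ ν U / 2
  · exact (min_le_left _ _).trans_lt (h.lt_measure_finBdry_inter hS.1 hU hA h0 hhalf)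
  refine (min_le_right _ _).trans_lt
    (h.lt_measure_finBdry_inter_of_sdiff hmeas hS hU hA hβ hκ hβU ?_)
  by_contra! hlt
  have hsum : ν (A ∩ U) + ν (U \ A) = ν U := by
    rw [inter_comm]; exact measure_inter_add_sdiff U hA
  refine lt_irrefl (ν U) ?_
  calc ν U = ν U / 2 + ν U / 2 := (ENNReal.add_halves _).symm
    _ < ν (A ∩ U) + ν (U \ A) := ENNReal.add_lt_add (not_le.1 hhalf) hlt
    _ = ν U := hsum

end Expansion

def HasLargeExpansionDomains {Γ X : Type*} [Group Γ] [MulAction Γ X] [MeasurableSpace X]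
    (ν : Measure X) (S : Finset Γ) : Prop :=
  ∀ α : ℝ, 0 < α → ∃ D : Set X, MeasurableSet D ∧ ν Dᶜ ≤ ENNReal.ofReal α ∧
    ∃ c : ℝ, 0 < c ∧ ExpandsOn ν D c S

section Domains

variable {Γ X : Type*} [Group Γ] [MulAction Γ X] [MeasurableSpace X] {ν : Measure X}
  [IsProbabilityMeasure ν] {S : Finset Γ}

lemma ExpandsOn.union (hmeas : ∀ γ : Γ, Measurable fun x : X => γ • x)
    (hmcp : MeasClassPres Γ ν) (hS : SymmFin S) {Y Y' : Set X} {c c' : ℝ}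
    (hY : MeasurableSet Y) (hY' : MeasurableSet Y') (hc : 0 < c) (hc' : 0 < c')
    (hY78 : ENNReal.ofReal (7 / 8) ≤ ν Y) (hY'78 : ENNReal.ofReal (7 / 8) ≤ ν Y')
    (h : ExpandsOn ν Y c S) (h' : ExpandsOn ν Y' c' S) :
    ∃ c₂ : ℝ, 0 < c₂ ∧ ExpandsOn ν (Y ∪ Y') c₂ S := by
  set c₀ := min c c'
  obtain ⟨κ, hκ0, hκ⟩ := exists_pos_min_lt_measure_finBdry_inter hmeas hmcp hS (lt_min hc hc')
    (by norm_num : (0 : ℝ) < 3 / 8)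
  refine ⟨min (c₀ / 2) κ, by positivity, fun A hA hAW hA0 hAhalf => ?_⟩
  rw [lt_measure_finSMul_inter_iff hS.1 hA hAW]
  have hA12 : ν A ≤ ENNReal.ofReal (1 / 2) :=
    ENNReal.ofReal_one_half ▸ hAhalf.trans (ENNReal.div_le_div_right prob_le_one 2)
  have side : ∀ U, U ⊆ Y ∪ Y' → MeasurableSet U → ExpandsOn ν U c₀ S →
      ENNReal.ofReal (7 / 8) ≤ ν U → ν A ≤ 2 * ν (A ∩ U) →
      ENNReal.ofReal (min (c₀ / 2) κ) * ν A < ν (finBdry S A ∩ (Y ∪ Y')) := by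
    intro U hUW hU hUexp hU78 hAU
    have h0 : 0 < ν (A ∩ U) := by
      refine pos_iff_ne_zero.2 fun hz => hA0.ne' (le_antisymm ?_ zero_le)
      simpa [hz] using hAU
    have hβ : ENNReal.ofReal (3 / 8) ≤ ν (U \ A) := by
      convert ofReal_sub_le_measure_sdiff hU78 hA12 (by norm_num) using 2
      norm_num
    refine lt_of_le_of_lt (le_min ?_ ?_) ((hκ U A hU hA hUexp h0 hβ).trans_le
      (measure_mono (inter_subset_inter_right _ hUW)))
    · calc ENNReal.ofReal (min (c₀ / 2) κ) * ν A
          ≤ ENNReal.ofReal (c₀ / 2) * (2 * ν (A ∩ U)) :=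
            mul_le_mul' (ENNReal.ofReal_le_ofReal (min_le_left _ _)) hAU
        _ = ENNReal.ofReal c₀ * ν (A ∩ U) := by
            rw [ENNReal.ofReal_div_of_pos two_pos, ← mul_assoc, ENNReal.ofReal_ofNat,
              ENNReal.div_mul_cancel two_ne_zero ENNReal.ofNat_ne_top]
    · exact (mul_le_of_le_one_right' prob_le_one).trans
        (ENNReal.ofReal_le_ofReal (min_le_right _ _))
  have hsplit : ν A ≤ ν (A ∩ Y) + ν (A ∩ Y') := by
    calc ν A = ν ((A ∩ Y) ∪ (A ∩ Y')) := by rw [← inter_union_distrib_left, inter_eq_left.2 hAW]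
      _ ≤ ν (A ∩ Y) + ν (A ∩ Y') := measure_union_le _ _
  rcases le_total (ν (A ∩ Y')) (ν (A ∩ Y)) with hle | hle
  · exact side Y subset_union_left hY (h.mono (min_le_left _ _)) hY78
      (two_mul (ν (A ∩ Y)) ▸ hsplit.trans (add_le_add_right hle _))
  · exact side Y' subset_union_right hY' (h'.mono (min_le_right _ _)) hY'78
      (two_mul (ν (A ∩ Y')) ▸ hsplit.trans (add_le_add_left hle _))

lemma asymExpDomain_univ_of_hasLargeExpansionDomains
    (hmeas : ∀ γ : Γ, Measurable fun x : X => γ • x) (hmcp : MeasClassPres Γ ν)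
    (hS : SymmFin S) (h : HasLargeExpansionDomains ν S) : AsymExpDomain Γ ν univ := by
  intro α hα hα2
  obtain ⟨D, hD, hDc, c, hc, hexp⟩ := h (α / 4) (by positivity)
  obtain ⟨κ, hκ0, hκ⟩ := exists_pos_min_lt_measure_finBdry_inter hmeas hmcp hS hc
    (by norm_num : (0 : ℝ) < 3 / 8)
  refine ⟨min (3 * c * α / 4) κ, by positivity, S, hS, fun A hA _ hαA hA2 => ?_⟩
  rw [measure_univ, mul_one] at hαA
  rw [measure_univ, ← ENNReal.ofReal_one_half] at hA2
  rw [lt_measure_finSMul_inter_iff hS.1 hA (subset_univ A)]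
  have hAD : ENNReal.ofReal (3 * α / 4) ≤ ν (A ∩ D) := by
    convert ofReal_sub_le_measure_sdiff hαA hDc (by positivity) using 1
    · ring_nf
    · rw [sdiff_compl]
  have hβ : ENNReal.ofReal (3 / 8) ≤ ν (D \ A) := by
    have hD78 : ENNReal.ofReal (7 / 8) ≤ ν D :=
      (ENNReal.ofReal_le_ofReal (by linarith)).trans
        (ofReal_one_sub_le_measure (by positivity) hDc)
    convert ofReal_sub_le_measure_sdiff hD78 hA2 (by norm_num) using 2
    norm_num
  refine lt_of_le_of_lt (le_min ?_ ?_) ((hκ D A hD hA hexp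
    ((ENNReal.ofReal_pos.2 (by positivity)).trans_le hAD) hβ).trans_le
    (measure_mono (inter_subset_inter_right _ (subset_univ D))))
  · calc ENNReal.ofReal (min (3 * c * α / 4) κ) * ν A ≤ ENNReal.ofReal (3 * c * α / 4) :=
          (mul_le_of_le_one_right' prob_le_one).trans (ENNReal.ofReal_le_ofReal (min_le_left _ _))
      _ = ENNReal.ofReal c * ENNReal.ofReal (3 * α / 4) := by
          rw [← ENNReal.ofReal_mul hc.le]; ring_nf
      _ ≤ ENNReal.ofReal c * ν (A ∩ D) := by gcongr
  · exact (mul_le_of_le_one_right' prob_le_one).trans (ENNReal.ofReal_le_ofReal (min_le_right _ _))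

end Domains

section Exhaustion

variable {Γ X : Type*} [Group Γ] [MulAction Γ X] [MeasurableSpace X] {ν : Measure X}
  {S : Finset Γ}

lemma hasLargeExpansionDomains_of_exhaustion [IsFiniteMeasure ν] {Y : ℕ → Set X} {c : ℕ → ℝ}
    (hmono : Monotone Y) (hY : ∀ n, MeasurableSet (Y n)) (hnull : ν (univ \ ⋃ n, Y n) = 0)
    (hexp : ∀ n, 0 < c n ∧ ExpandsOn ν (Y n) (c n) S) : HasLargeExpansionDomains ν S := by
  intro α hα
  obtain ⟨n, hn⟩ := ((tendsto_measure_iUnion_sdiff_atTop (ν := ν) hmono hY).eventually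
    (ge_mem_nhds (ENNReal.ofReal_pos.2 hα))).exists
  refine ⟨Y n, hY n, ?_, c n, hexp n⟩
  calc ν (Y n)ᶜ ≤ ν (univ \ ⋃ i, Y i) + ν ((⋃ i, Y i) \ Y n) := by
        refine (measure_mono fun x hx => ?_).trans (measure_union_le _ _)
        by_cases hxY : x ∈ ⋃ i, Y i
        exacts [Or.inr ⟨hxY, hx⟩, Or.inl ⟨mem_univ x, hxY⟩]
    _ ≤ ENNReal.ofReal α := by rw [hnull, zero_add]; exact hn

lemma exists_exhaustion_of_hasLargeExpansionDomains [IsProbabilityMeasure ν]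
    (hmeas : ∀ γ : Γ, Measurable fun x : X => γ • x) (hmcp : MeasClassPres Γ ν)
    (hS : SymmFin S) (h : HasLargeExpansionDomains ν S) :
    ∃ (Y : ℕ → Set X) (c : ℕ → ℝ), Monotone Y ∧ (∀ n, MeasurableSet (Y n)) ∧
      ν (univ \ ⋃ n, Y n) = 0 ∧ ∀ n, 0 < c n ∧ 0 < ν (Y n) ∧ ExpandsOn ν (Y n) (c n) S := by
  set ε : ℕ → ℝ := fun n => 1 / ((n : ℝ) + 1) / 8
  choose D hD hDc c hc hexp using fun n => h (ε n) (by positivity)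
  have hε8 : ∀ n, ε n ≤ 1 / 8 := fun n => div_le_div_of_nonneg_right
    (div_le_one_of_le₀ (le_add_of_nonneg_left n.cast_nonneg) (by positivity)) (by norm_num)
  have hD78 : ∀ n, ENNReal.ofReal (7 / 8) ≤ ν (D n) := fun n =>
    (ENNReal.ofReal_le_ofReal (by linarith [hε8 n])).trans
      (ofReal_one_sub_le_measure (by positivity) (hDc n))
  set Y := partialSups D
  have hYD : ∀ n, D n ⊆ Y n := le_partialSups D
  have hY : ∀ n, MeasurableSet (Y n) ∧ ∃ c, 0 < c ∧ ExpandsOn ν (Y n) c S := by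
    intro n
    induction n with
    | zero => exact ⟨by simpa [Y] using hD 0, by simpa [Y] using ⟨c 0, hc 0, hexp 0⟩⟩
    | succ n ih =>
      obtain ⟨hYn, c', hc', hexp'⟩ := ih
      have hsucc : Y (n + 1) = Y n ∪ D (n + 1) := partialSups_succ D n
      rw [hsucc]
      exact ⟨hYn.union (hD _), ExpandsOn.union hmeas hmcp hS hYn (hD _) hc' (hc _)
        ((hD78 n).trans (measure_mono (hYD n))) (hD78 _) hexp' (hexp _)⟩
  choose hYm cY hcY hexpY using hY
  refine ⟨Y, cY, (partialSups D).monotone, hYm, ?_, fun n => ⟨hcY n, ?_, hexpY n⟩⟩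
  · have hε : Tendsto (fun n => ENNReal.ofReal (ε n)) atTop (𝓝 0) := by
      simpa [ε] using ENNReal.tendsto_ofReal
        ((tendsto_one_div_add_atTop_nhds_zero_nat (𝕜 := ℝ)).div_const 8)
    refine le_antisymm (ge_of_tendsto' hε fun n => ?_) zero_le
    refine (measure_mono ?_).trans (hDc n)
    exact fun x hx hxD => hx.2 (mem_iUnion.2 ⟨n, hYD n hxD⟩)
  · exact (ENNReal.ofReal_pos.2 (by norm_num)).trans_le ((hD78 n).trans (measure_mono (hYD n)))

end Exhaustion

section Isoperimetry

variable {Γ X : Type*} [Group Γ] [DecidableEq Γ] [MulAction Γ X] [MeasurableSpace X]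
  {ν : Measure X} [IsProbabilityMeasure ν] {S : Finset Γ}

/-- Once `T ⊆ S ^ k`, the `T`-boundary of `U` and of `Uᶜ` lie in `S ^ (k + 1)` times the
`S`-boundary of `U`, which is small when the latter is. -/
lemma AsymExpDomain.measure_lt_of_measure_finBdry_le (h : AsymExpDomain Γ ν univ)
    (hmeas : ∀ γ : Γ, Measurable fun x : X => γ • x) (hmcp : MeasClassPres Γ ν)
    (hS : SymmFin S) (hgen : Subgroup.closure (S : Set Γ) = ⊤) {α : ℝ} (hα : 0 < α)
    (hα2 : α ≤ 1 / 2) :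
    ∃ δ : ℝ, 0 < δ ∧ ∀ U, MeasurableSet U → ν (finBdry S U) ≤ ENNReal.ofReal δ →
      ν U ≤ ENNReal.ofReal (1 - α) → ν U < ENNReal.ofReal α := by
  obtain ⟨c, hc, T, hT, hexp⟩ := h α hα hα2
  obtain ⟨k, hk⟩ := exists_subset_pow_of_closure_eq_top hS hgen T
  obtain ⟨δ, hδ, hsmall⟩ := hmcp.exists_pos_measure_finSMul_lt hmeas (S ^ (k + 1)) (mul_pos hc hα)
  refine ⟨δ, hδ, fun U hU hbdry hU1 => ?_⟩
  by_contra! hαU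
  have key : ∀ A, MeasurableSet A → ENNReal.ofReal α ≤ ν A → ν A ≤ 1 / 2 →
      finBdry T A ⊆ finSMul (S ^ (k + 1)) (finBdry S U) → False := by
    intro A hA hαA hA2 hsub
    refine (hsmall _ (measurableSet_finBdry hmeas S hU) hbdry).not_ge ?_
    calc ENNReal.ofReal (c * α) = ENNReal.ofReal c * ENNReal.ofReal α := ENNReal.ofReal_mul hc.le
      _ ≤ ENNReal.ofReal c * ν A := by gcongr
      _ ≤ ν (finBdry T A ∩ univ) := ((lt_measure_finSMul_inter_iff hT.1 hA (subset_univ A)).1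
          (hexp A hA (subset_univ A) (by simpa using hαA) (by simpa using hA2))).le
      _ ≤ ν (finSMul (S ^ (k + 1)) (finBdry S U)) := measure_mono (inter_subset_left.trans hsub)
  have hTk : ∀ A : Set X, finBdry T A ⊆ finSMul (S ^ k) (finBdry S A) := fun A =>
    (finBdry_mono_left hk).trans (finBdry_pow_subset hS.1 k)
  rcases le_or_gt (ν U) (1 / 2) with hU2 | hU2
  · exact key U hU hαU hU2
      ((hTk U).trans (finSMul_mono_left (Finset.pow_subset_pow_right hS.1 k.le_succ)))
  refine key Uᶜ hU.compl ?_ ?_ ?_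
  · rw [prob_compl_eq_one_sub hU]
    refine ENNReal.le_sub_of_add_le_left (measure_ne_top ν U) ?_
    calc ν U + ENNReal.ofReal α ≤ ENNReal.ofReal (1 - α) + ENNReal.ofReal α := by gcongr
      _ = 1 := by rw [← ENNReal.ofReal_add (by linarith) hα.le]; simp
  · rw [prob_compl_eq_one_sub hU, tsub_le_iff_right]
    calc (1 : ℝ≥0∞) = 1 / 2 + 1 / 2 := (ENNReal.add_halves 1).symm
      _ ≤ 1 / 2 + ν U := by gcongr
  · calc finBdry T Uᶜ ⊆ finSMul (S ^ k) (finSMul S (finBdry S U)) :=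
          (hTk Uᶜ).trans (finSMul_mono (finBdry_compl_subset hS.2))
      _ = finSMul (S ^ (k + 1)) (finBdry S U) := by rw [pow_succ, finSMul_mul]

end Isoperimetry

def greedyUnion {X : Type*} (pick : Set X → Set X) : ℕ → Set X
  | 0 => ∅
  | n + 1 => greedyUnion pick n ∪ pick (greedyUnion pick n)ᶜ

lemma greedyUnion_monotone {X : Type*} (pick : Set X → Set X) : Monotone (greedyUnion pick) :=
  monotone_nat_of_le_succ fun _ => subset_union_left

section Greedy

variable {Γ X : Type*} [Group Γ] [MulAction Γ X] [MeasurableSpace X] {ν : Measure X}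
  {S : Finset Γ} {c : ℝ} {Y : Set X}

variable (ν S) in
def IsNonExpanding (c : ℝ) (Y A : Set X) : Prop :=
  MeasurableSet A ∧ A ⊆ Y ∧ ν A ≤ ν Y / 2 ∧ ν (finBdry S A ∩ Y) ≤ ENNReal.ofReal c * ν A

lemma isNonExpanding_empty : IsNonExpanding ν S c Y ∅ := by
  simp [IsNonExpanding, finBdry, finSMul]

lemma expandsOn_iff_forall_isNonExpanding_measure_eq_zero [IsFiniteMeasure ν]
    (h1 : (1 : Γ) ∈ S) : ExpandsOn ν Y c S ↔ ∀ A, IsNonExpanding ν S c Y A → ν A = 0 := by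
  refine ⟨fun h A ⟨hA, hAY, hhalf, hle⟩ => by_contra fun h0 =>
    ((lt_measure_finSMul_inter_iff h1 hA hAY).1
      (h A hA hAY (pos_iff_ne_zero.2 h0) hhalf)).not_ge hle,
    fun h A hA hAY h0 hhalf => (lt_measure_finSMul_inter_iff h1 hA hAY).2 (not_le.1 fun hle =>
      h0.ne' (h A ⟨hA, hAY, hhalf, hle⟩))⟩

lemma exists_forall_measure_le_two_mul (ν : Measure X) [IsFiniteMeasure ν] {p : Set X → Prop}
    (h : p ∅) : ∃ P, p P ∧ ∀ A, p A → ν A ≤ 2 * ν P := by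
  set m := ⨆ (A) (_ : p A), ν A
  have hle : ∀ A, p A → ν A ≤ m := fun A hA => le_iSup₂ (f := fun A (_ : p A) => ν A) A hA
  rcases eq_or_ne m 0 with hm | hm
  · exact ⟨∅, h, fun A hA => by simpa [hm] using hle A hA⟩
  have hmtop : m ≠ ∞ := ne_top_of_le_ne_top (measure_ne_top ν univ)
    (iSup₂_le fun A _ => measure_mono (subset_univ A))
  obtain ⟨P, hP, hmP⟩ : ∃ P, p P ∧ m / 2 < ν P := by
    simpa [m, lt_iSup_iff] using ENNReal.half_lt_self hm hmtop
  refine ⟨P, hP, fun A hA => ?_⟩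
  calc ν A ≤ m := hle A hA
    _ = 2 * (m / 2) := (ENNReal.mul_div_cancel two_ne_zero ENNReal.ofNat_ne_top).symm
    _ ≤ 2 * ν P := by gcongr

variable {pick : Set X → Set X}

lemma measurableSet_greedyUnion (hpick : ∀ Y, IsNonExpanding ν S c Y (pick Y)) (n : ℕ) :
    MeasurableSet (greedyUnion pick n) := by
  induction n with
  | zero => exact MeasurableSet.empty
  | succ n ih => exact ih.union (hpick _).1

lemma measure_finBdry_greedyUnion_le (hpick : ∀ Y, IsNonExpanding ν S c Y (pick Y)) (n : ℕ) :
    ν (finBdry S (greedyUnion pick n)) ≤ ENNReal.ofReal c * ν (greedyUnion pick n) := by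
  induction n with
  | zero => simp [greedyUnion, finBdry, finSMul]
  | succ n ih =>
    set U := greedyUnion pick n
    obtain ⟨hP, hPU, -, hbdry⟩ := hpick Uᶜ
    calc ν (finBdry S (U ∪ pick Uᶜ)) ≤ ν (finBdry S U) + ν (finBdry S (pick Uᶜ) ∩ Uᶜ) :=
          (measure_mono finBdry_union_subset).trans (measure_union_le _ _)
      _ ≤ ENNReal.ofReal c * ν U + ENNReal.ofReal c * ν (pick Uᶜ) := add_le_add ih hbdry
      _ = ENNReal.ofReal c * ν (U ∪ pick Uᶜ) := by
          rw [← mul_add, measure_union (disjoint_compl_right.mono_right hPU) hP]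

lemma measure_greedyUnion_lt [IsProbabilityMeasure ν]
    (hpick : ∀ Y, IsNonExpanding ν S c Y (pick Y)) {α : ℝ} (hα : 0 < α) (hα4 : α ≤ 1 / 4)
    (hiso : ∀ U, MeasurableSet U → ν (finBdry S U) ≤ ENNReal.ofReal c →
      ν U ≤ ENNReal.ofReal (1 - α) → ν U < ENNReal.ofReal α) (n : ℕ) :
    ν (greedyUnion pick n) < ENNReal.ofReal α := by
  induction n with
  | zero => simpa [greedyUnion] using hα
  | succ n ih =>
    refine hiso _ (measurableSet_greedyUnion hpick _)
      ((measure_finBdry_greedyUnion_le hpick _).trans (mul_le_of_le_one_right' prob_le_one)) ?_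
    have hP : ν (pick (greedyUnion pick n)ᶜ) ≤ ENNReal.ofReal (1 / 2) :=
      ENNReal.ofReal_one_half ▸ (hpick _).2.2.1.trans (ENNReal.div_le_div_right prob_le_one 2)
    calc ν (greedyUnion pick (n + 1))
        ≤ ν (greedyUnion pick n) + ν (pick (greedyUnion pick n)ᶜ) := measure_union_le _ _
      _ ≤ ENNReal.ofReal α + ENNReal.ofReal (1 / 2) := add_le_add ih.le hP
      _ = ENNReal.ofReal (α + 1 / 2) := (ENNReal.ofReal_add hα.le (by norm_num)).symm
      _ ≤ ENNReal.ofReal (1 - α) := ENNReal.ofReal_le_ofReal (by linarith)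

/-- A non-expanding subset of the remainder would be non-expanding in all late stages, where
the picked sets, being disjoint, become arbitrarily small. -/
lemma expandsOn_compl_iUnion_greedyUnion [IsFiniteMeasure ν] (h1 : (1 : Γ) ∈ S) (hc : 0 < c)
    (hpick : ∀ Y, IsNonExpanding ν S c Y (pick Y))
    (hmax : ∀ Y A, IsNonExpanding ν S c Y A → ν A ≤ 2 * ν (pick Y)) :
    ExpandsOn ν (⋃ n, greedyUnion pick n)ᶜ (c / 2) S := by
  set U := greedyUnion pick
  set V := ⋃ n, U n
  rw [expandsOn_iff_forall_isNonExpanding_measure_eq_zero h1]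
  rintro B ⟨hB, hBV, hBhalf, hBbdry⟩
  by_contra hB0
  have hB0 : 0 < ν B := pos_iff_ne_zero.2 hB0
  have htail := tendsto_measure_iUnion_sdiff_atTop (ν := ν) (greedyUnion_monotone pick)
    (measurableSet_greedyUnion hpick)
  obtain ⟨n, hn1, hn2⟩ := ((htail.eventually (ge_mem_nhds (ENNReal.mul_pos
    (ENNReal.ofReal_pos.2 (half_pos hc)).ne' hB0.ne'))).and
    (htail.eventually (gt_mem_nhds (ENNReal.half_pos hB0.ne')))).exists
  have hVn : Vᶜ ⊆ (U n)ᶜ := compl_subset_compl.2 (subset_iUnion U n)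
  have hbad : IsNonExpanding ν S c (U n)ᶜ B := by
    refine ⟨hB, hBV.trans hVn, hBhalf.trans (ENNReal.div_le_div_right (measure_mono hVn) 2), ?_⟩
    calc ν (finBdry S B ∩ (U n)ᶜ) ≤ ν (finBdry S B ∩ Vᶜ) + ν (V \ U n) := by
          refine (measure_mono fun x hx => ?_).trans (measure_union_le _ _)
          by_cases hxV : x ∈ V
          exacts [Or.inr ⟨hxV, hx.2⟩, Or.inl ⟨hx.1, hxV⟩]
      _ ≤ ENNReal.ofReal (c / 2) * ν B + ENNReal.ofReal (c / 2) * ν B := add_le_add hBbdry hn1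
      _ = ENNReal.ofReal c * ν B := by
          rw [← add_mul, ← ENNReal.ofReal_add (by positivity) (by positivity), add_halves]
  have hpickV : pick (U n)ᶜ ⊆ V \ U n := fun x hx =>
    ⟨mem_iUnion.2 ⟨n + 1, Or.inr hx⟩, (hpick _).2.1 hx⟩
  refine lt_irrefl (ν B) ?_
  calc ν B ≤ 2 * ν (pick (U n)ᶜ) := hmax _ _ hbad
    _ ≤ 2 * ν (V \ U n) := by gcongr
    _ < 2 * (ν B / 2) := ENNReal.mul_lt_mul_right two_ne_zero ENNReal.ofNat_ne_top hn2
    _ = ν B := ENNReal.mul_div_cancel two_ne_zero ENNReal.ofNat_ne_top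

lemma hasLargeExpansionDomains_of_asymExpDomain [DecidableEq Γ] [IsProbabilityMeasure ν]
    (hmeas : ∀ γ : Γ, Measurable fun x : X => γ • x) (hmcp : MeasClassPres Γ ν)
    (hS : SymmFin S) (hgen : Subgroup.closure (S : Set Γ) = ⊤) (h : AsymExpDomain Γ ν univ) :
    HasLargeExpansionDomains ν S := by
  intro α hα
  have hα' : 0 < min α (1 / 4) := lt_min hα (by norm_num)
  obtain ⟨δ, hδ, hiso⟩ := h.measure_lt_of_measure_finBdry_le hmeas hmcp hS hgen hα'
    ((min_le_right _ _).trans (by norm_num))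
  choose pick hpick hmax using fun Y : Set X =>
    exists_forall_measure_le_two_mul ν (isNonExpanding_empty (S := S) (c := δ) (Y := Y))
  refine ⟨(⋃ n, greedyUnion pick n)ᶜ,
    (MeasurableSet.iUnion (measurableSet_greedyUnion hpick)).compl, ?_, δ / 2, half_pos hδ,
    expandsOn_compl_iUnion_greedyUnion hS.1 hδ hpick hmax⟩
  rw [compl_compl, (greedyUnion_monotone pick).measure_iUnion]
  exact iSup_le fun n => (measure_greedyUnion_lt hpick hα' (min_le_right _ _) hiso n).le.trans
    (ENNReal.ofReal_le_ofReal (min_le_left _ _))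

end Greedy

theorem quantitative_structure_theorem_fg_general
    {Γ X : Type*} [Group Γ] [MulAction Γ X] [MeasurableSpace X]
    (ν : Measure X) [IsProbabilityMeasure ν]
    (hmeas : ∀ γ : Γ, Measurable fun x : X => γ • x)
    (hmcp : MeasClassPres Γ ν)
    (S : Finset Γ) (hS : SymmFin S) (hgen : Subgroup.closure (S : Set Γ) = ⊤) :
    AsymExpDomain Γ ν Set.univ ↔
      ∃ (Yseq : ℕ → Set X) (cseq : ℕ → ℝ),
        Monotone Yseq ∧ (∀ n, MeasurableSet (Yseq n)) ∧
        ν (Set.univ \ ⋃ n, Yseq n) = 0 ∧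
        ∀ n, 0 < cseq n ∧ 0 < ν (Yseq n) ∧ ExpandsOn ν (Yseq n) (cseq n) S := by
  classical
  constructor
  · intro h
    exact exists_exhaustion_of_hasLargeExpansionDomains hmeas hmcp hS
      (hasLargeExpansionDomains_of_asymExpDomain hmeas hmcp hS hgen h)
  · rintro ⟨Y, c, hmono, hY, hnull, hexp⟩
    exact asymExpDomain_univ_of_hasLargeExpansionDomains hmeas hmcp hS
      (hasLargeExpansionDomains_of_exhaustion hmono hY hnull fun n => ⟨(hexp n).1, (hexp n).2.2⟩)

/-- Corollary 4.10: for a measure-class-preserving action on a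
probability space of a group generated by a finite symmetric set `S ∋ 1`, asymptotic
expansion in measure is equivalent to the existence of an exhaustion of `X` by domains of
`S`-expansion. -/
theorem quantitative_structure_theorem_fg
    {Γ X : Type*} [Group Γ] [Countable Γ] [MulAction Γ X] [MeasurableSpace X]
    (ν : Measure X) [IsProbabilityMeasure ν]
    (hmeas : ∀ γ : Γ, Measurable fun x : X => γ • x)
    (hmcp : MeasClassPres Γ ν)
    (S : Finset Γ) (hS : SymmFin S) (hgen : Subgroup.closure (S : Set Γ) = ⊤) :
    AsymExpDomain Γ ν Set.univ ↔
      ∃ (Yseq : ℕ → Set X) (cseq : ℕ → ℝ),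
        Monotone Yseq ∧ (∀ n, MeasurableSet (Yseq n)) ∧
        ν (Set.univ \ ⋃ n, Yseq n) = 0 ∧
        ∀ n, 0 < cseq n ∧ 0 < ν (Yseq n) ∧ ExpandsOn ν (Yseq n) (cseq n) S :=
  quantitative_structure_theorem_fg_general ν hmeas hmcp S hS hgen
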